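/- If the gadget graph G_θ has a selective subset of cardinality at most 2n + m, then the monotone 3-CNF formula θ is satisfiable; consequently, θ is satisfiable if and only if G_θ admits a selective subset of size 2n + m. -/
import Mathlib


/-- The set of nearest neighbors of `v` in `U` with respect to hop-distance in `G`:
`N̂(v,U) = {u ∈ U : d(v,u) = min_{w ∈ U} d(v,w)}` (empty if `U` is empty). -/
def NearestSet {V : Type*} (G : SimpleGraph V) (v : V) (U : Set V) : Set V :=
  {u | u ∈ U ∧ ∀ w ∈ U, G.dist v u ≤ G.dist v w}

/-- `S` is a selective subset of `(G, C)`: every vertex `v` has, among its nearest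
neighbors in `S ∪ (V ∖ V_{C v})`, at least one vertex of its own color. -/
def IsSelective {V α : Type*} (G : SimpleGraph V) (C : V → α) (S : Set V) : Prop :=
  ∀ v : V, ∃ u ∈ NearestSet G v (S ∪ {w | C w ≠ C v}), C u = C v

/-- Vertices of the gadget graph `G_θ` for a monotone 3-CNF formula with `n` variables and
`m` clauses. `var i s k` is `x_{i,k+1}` when `s = true` and `x̄_{i,k+1}` when `s = false`;
`cl j k` is the clause vertex `c_{j,k+1}`. -/
inductive GVert (n m : ℕ) where
  | var (i : Fin n) (s : Bool) (k : Fin 3)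
  | cl (j : Fin m) (k : Fin 3)
deriving DecidableEq

/-- The edges of the gadget graph `G_θ` (up to symmetry). The formula is described by
`pos j` (true iff clause `j` is positive) and `lit j` (its three variables). -/
def gadgetRel {n m : ℕ} (pos : Fin m → Bool) (lit : Fin m → Fin 3 → Fin n)
    (a b : GVert n m) : Prop :=
  -- literal paths x_{i,1}x_{i,2}, x_{i,2}x_{i,3}, x̄_{i,1}x̄_{i,2}, x̄_{i,2}x̄_{i,3}
  (∃ (i : Fin n) (s : Bool),
      (a = GVert.var i s 0 ∧ b = GVert.var i s 1) ∨
      (a = GVert.var i s 1 ∧ b = GVert.var i s 2)) ∨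
  -- cross edges x_{i,1}x̄_{i,1}, x_{i,2}x̄_{i,3}, x_{i,3}x̄_{i,2}, x_{i,3}x̄_{i,3}
  (∃ i : Fin n,
      (a = GVert.var i true 0 ∧ b = GVert.var i false 0) ∨
      (a = GVert.var i true 1 ∧ b = GVert.var i false 2) ∨
      (a = GVert.var i true 2 ∧ b = GVert.var i false 1) ∨
      (a = GVert.var i true 2 ∧ b = GVert.var i false 2)) ∨
  -- clause paths c_{j,1}c_{j,2}, c_{j,2}c_{j,3}
  (∃ j : Fin m,
      (a = GVert.cl j 0 ∧ b = GVert.cl j 1) ∨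
      (a = GVert.cl j 1 ∧ b = GVert.cl j 2)) ∨
  -- clause-literal edges c_{j,3} to the third vertex of each of its literal paths
  (∃ (j : Fin m) (k : Fin 3), a = GVert.cl j 2 ∧ b = GVert.var (lit j k) (pos j) 2)

/-- The gadget graph `G_θ`. -/
def gadgetGraph {n m : ℕ} (pos : Fin m → Bool) (lit : Fin m → Fin 3 → Fin n) :
    SimpleGraph (GVert n m) :=
  SimpleGraph.fromRel (gadgetRel pos lit)

/-- The 2-coloring of `G_θ`: `true` = red, `false` = blue. `x_{i,1}, x̄_{i,1}` and
`c_{j,1}, c_{j,2}` are red; all other vertices are blue. -/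
def gadgetColor {n m : ℕ} : GVert n m → Bool
  | GVert.var _ _ k => k == 0
  | GVert.cl _ k => !(k == 2)

open GVert

section Aux
variable {n m : ℕ} (pos : Fin m → Bool) (lit : Fin m → Fin 3 → Fin n)

lemma adj_var0 (i : Fin n) (s : Bool) (w : GVert n m) :
    (gadgetGraph pos lit).Adj (var i s 0) w ↔ w = var i s 1 ∨ w = var i (!s) 0 := by
  rw [gadgetGraph, SimpleGraph.fromRel_adj]
  constructor
  · rintro ⟨hne, h | h⟩ <;>
    · rcases h with ⟨i',s',(⟨h1,h2⟩|⟨h1,h2⟩)⟩ | ⟨i',(⟨h1,h2⟩|⟨h1,h2⟩|⟨h1,h2⟩|⟨h1,h2⟩)⟩ |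
        ⟨j',(⟨h1,h2⟩|⟨h1,h2⟩)⟩ | ⟨j',k',h1,h2⟩ <;>
      · cases s <;> simp_all
  · rintro (rfl | rfl) <;> refine ⟨by simp, ?_⟩ <;> cases s <;> simp [gadgetRel]

lemma adj_var1 (i : Fin n) (s : Bool) (w : GVert n m) :
    (gadgetGraph pos lit).Adj (var i s 1) w ↔
      w = var i s 0 ∨ w = var i s 2 ∨ w = var i (!s) 2 := by
  rw [gadgetGraph, SimpleGraph.fromRel_adj]
  constructor
  · rintro ⟨hne, h | h⟩ <;>
    · rcases h with ⟨i',s',(⟨h1,h2⟩|⟨h1,h2⟩)⟩ | ⟨i',(⟨h1,h2⟩|⟨h1,h2⟩|⟨h1,h2⟩|⟨h1,h2⟩)⟩ |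
        ⟨j',(⟨h1,h2⟩|⟨h1,h2⟩)⟩ | ⟨j',k',h1,h2⟩ <;>
      · cases s <;> simp_all
  · rintro (rfl | rfl | rfl) <;> refine ⟨by simp, ?_⟩ <;> cases s <;> simp [gadgetRel]

lemma adj_cl0 (j : Fin m) (w : GVert n m) :
    (gadgetGraph pos lit).Adj (cl j 0) w ↔ w = cl j 1 := by
  rw [gadgetGraph, SimpleGraph.fromRel_adj]
  constructor
  · rintro ⟨hne, h | h⟩ <;>
    · rcases h with ⟨i',s',(⟨h1,h2⟩|⟨h1,h2⟩)⟩ | ⟨i',(⟨h1,h2⟩|⟨h1,h2⟩|⟨h1,h2⟩|⟨h1,h2⟩)⟩ |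
        ⟨j',(⟨h1,h2⟩|⟨h1,h2⟩)⟩ | ⟨j',k',h1,h2⟩ <;> simp_all
  · rintro rfl; exact ⟨by simp, by simp [gadgetRel]⟩

lemma adj_cl1 (j : Fin m) (w : GVert n m) :
    (gadgetGraph pos lit).Adj (cl j 1) w ↔ w = cl j 0 ∨ w = cl j 2 := by
  rw [gadgetGraph, SimpleGraph.fromRel_adj]
  constructor
  · rintro ⟨hne, h | h⟩ <;>
    · rcases h with ⟨i',s',(⟨h1,h2⟩|⟨h1,h2⟩)⟩ | ⟨i',(⟨h1,h2⟩|⟨h1,h2⟩|⟨h1,h2⟩|⟨h1,h2⟩)⟩ |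
        ⟨j',(⟨h1,h2⟩|⟨h1,h2⟩)⟩ | ⟨j',k',h1,h2⟩ <;> simp_all
  · rintro (rfl | rfl) <;> exact ⟨by simp, by simp [gadgetRel]⟩

lemma adj_cl2 (j : Fin m) (w : GVert n m) :
    (gadgetGraph pos lit).Adj (cl j 2) w ↔
      w = cl j 1 ∨ ∃ k : Fin 3, w = var (lit j k) (pos j) 2 := by
  rw [gadgetGraph, SimpleGraph.fromRel_adj]
  constructor
  · rintro ⟨hne, h | h⟩ <;>
    · rcases h with ⟨i',s',(⟨h1,h2⟩|⟨h1,h2⟩)⟩ | ⟨i',(⟨h1,h2⟩|⟨h1,h2⟩|⟨h1,h2⟩|⟨h1,h2⟩)⟩ |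
        ⟨j',(⟨h1,h2⟩|⟨h1,h2⟩)⟩ | ⟨j',k',h1,h2⟩ <;> simp_all
  · rintro (rfl | ⟨k, rfl⟩)
    · exact ⟨by simp, by simp [gadgetRel]⟩
    · refine ⟨by simp, Or.inl ?_⟩
      simp only [gadgetRel]
      exact Or.inr <| Or.inr <| Or.inr ⟨j, k, rfl, rfl⟩

end Aux
open GVert

section Aux2
variable {V : Type*} {G : SimpleGraph V}

lemma ball2 {v u : V} (p : G.Walk v u) (h : p.length ≤ 2) :
    u = v ∨ G.Adj v u ∨ ∃ w, G.Adj v w ∧ G.Adj w u := by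
  cases p with
  | nil => exact Or.inl rfl
  | cons h1 q =>
    cases q with
    | nil => exact Or.inr (Or.inl h1)
    | cons h2 r =>
      cases r with
      | nil => exact Or.inr (Or.inr ⟨_, h1, h2⟩)
      | cons h3 t => simp [SimpleGraph.Walk.length_cons] at h

lemma dist_le_one {v u : V} (h : G.Adj v u) : G.dist v u ≤ 1 := by
  have := SimpleGraph.dist_le (SimpleGraph.Walk.cons h SimpleGraph.Walk.nil)
  simpa using this

lemma dist_le_two {v w u : V} (h1 : G.Adj v w) (h2 : G.Adj w u) : G.dist v u ≤ 2 := by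
  have := SimpleGraph.dist_le
    (SimpleGraph.Walk.cons h1 (SimpleGraph.Walk.cons h2 SimpleGraph.Walk.nil))
  simpa using this

lemma sel_extract {C : V → Bool} {S : Set V} (hG : G.Connected)
    (hS : IsSelective G C S) (v w₀ : V) (hw₀ : C w₀ ≠ C v) {N : ℕ} (hd : G.dist v w₀ ≤ N) :
    ∃ u ∈ S, C u = C v ∧ G.dist v u ≤ N := by
  obtain ⟨u, ⟨hu, hmin⟩, hc⟩ := hS v
  have huS : u ∈ S := by
    rcases hu with h | h
    · exact h
    · exact absurd hc h
  exact ⟨u, huS, hc, le_trans (hmin w₀ (Set.mem_union_right _ hw₀)) hd⟩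

lemma sel_extract2 {C : V → Bool} {S : Set V} (hG : G.Connected)
    (hS : IsSelective G C S) (v w₀ : V) (hw₀ : C w₀ ≠ C v) {N : ℕ} (hN : N ≤ 2)
    (hd : G.dist v w₀ ≤ N) :
    ∃ u ∈ S, C u = C v ∧ (u = v ∨ G.Adj v u ∨ ∃ w, G.Adj v w ∧ G.Adj w u) := by
  obtain ⟨u, huS, hc, hle⟩ := sel_extract hG hS v w₀ hw₀ hd
  obtain ⟨p, hp⟩ := (hG v u).exists_walk_length_eq_dist
  exact ⟨u, huS, hc, ball2 p (by omega)⟩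

lemma selective_of_adj (hG : G.Connected) {C : V → Bool} {S : Set V}
    (h : ∀ v, v ∉ S → ∃ u ∈ S, C u = C v ∧ G.Adj v u) : IsSelective G C S := by
  intro v
  by_cases hv : v ∈ S
  · exact ⟨v, ⟨Set.mem_union_left _ hv, fun w _ => by simp [SimpleGraph.dist_self]⟩, rfl⟩
  · obtain ⟨u, hu, hcu, hadj⟩ := h v hv
    refine ⟨u, ⟨Set.mem_union_left _ hu, fun w hw => ?_⟩, hcu⟩
    have hne : v ≠ w := by
      rintro rfl
      rcases hw with h' | h'
      · exact hv h'
      · exact h' rfl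
    exact le_trans (dist_le_one hadj) (hG.pos_dist_of_ne hne)

lemma ball1 {v u : V} (p : G.Walk v u) (h : p.length ≤ 1) :
    u = v ∨ G.Adj v u := by
  cases p with
  | nil => exact Or.inl rfl
  | cons h1 q =>
    cases q with
    | nil => exact Or.inr h1
    | cons h2 r => simp [SimpleGraph.Walk.length_cons] at h

lemma sel_extract1 {C : V → Bool} {S : Set V} (hG : G.Connected)
    (hS : IsSelective G C S) (v w₀ : V) (hw₀ : C w₀ ≠ C v)
    (hd : G.dist v w₀ ≤ 1) :
    ∃ u ∈ S, C u = C v ∧ (u = v ∨ G.Adj v u) := by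
  obtain ⟨u, huS, hc, hle⟩ := sel_extract hG hS v w₀ hw₀ hd
  obtain ⟨p, hp⟩ := (hG v u).exists_walk_length_eq_dist
  exact ⟨u, huS, hc, ball1 p (by omega)⟩

end Aux2

instance {n m : ℕ} : Finite (GVert n m) := by
  apply Finite.of_injective (fun v : GVert n m => match v with
    | var i s k => Sum.inl (i, s, k)
    | cl j k => Sum.inr (j, k) :
    GVert n m → (Fin n × Bool × Fin 3) ⊕ (Fin m × Fin 3))
  rintro (⟨i, s, k⟩ | ⟨j, k⟩) (⟨i', s', k'⟩ | ⟨j', k'⟩) h <;> simp_all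
lemma forward {n m : ℕ} (pos : Fin m → Bool) (lit : Fin m → Fin 3 → Fin n)
    (hconn : (gadgetGraph pos lit).Connected) (σ : Fin n → Bool)
    (hsat : ∀ j : Fin m, ∃ k : Fin 3, σ (lit j k) = pos j) :
    ∃ S : Set (GVert n m), IsSelective (gadgetGraph pos lit) gadgetColor S ∧
      S.ncard = 2 * n + m := by
  classical
  set F : Fin m ⊕ (Fin n ⊕ Fin n) → GVert n m :=
    Sum.elim (fun j => cl j 1)
      (Sum.elim (fun i => var i (σ i) 0) (fun i => var i (σ i) 2)) with hF
  refine ⟨Set.range F, ?_, ?_⟩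
  · apply selective_of_adj hconn
    rintro (⟨i, s, k⟩ | ⟨j, k⟩) hv
    · fin_cases k
      · by_cases hss : σ i = s
        · exact absurd ⟨Sum.inr (Sum.inl i), by simp [hF, hss]⟩ hv
        · have hs : σ i = !s := by cases s <;> cases hσi : σ i <;> simp_all
          exact ⟨var i (!s) 0, ⟨Sum.inr (Sum.inl i), by simp [hF, hs]⟩, rfl,
            (adj_var0 pos lit i s _).mpr (Or.inr rfl)⟩
      · refine ⟨var i (σ i) 2, ⟨Sum.inr (Sum.inr i), rfl⟩, rfl, ?_⟩
        refine (adj_var1 pos lit i s _).mpr ?_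
        by_cases hss : σ i = s
        · exact Or.inr (Or.inl (by rw [hss]))
        · have hs : σ i = !s := by cases s <;> cases hσi : σ i <;> simp_all
          exact Or.inr (Or.inr (by rw [hs]))
      · by_cases hss : σ i = s
        · exact absurd ⟨Sum.inr (Sum.inr i), by simp [hF, hss]⟩ hv
        · have hs : σ i = !s := by cases s <;> cases hσi : σ i <;> simp_all
          refine ⟨var i (!s) 2, ⟨Sum.inr (Sum.inr i), by simp [hF, hs]⟩, rfl, ?_⟩
          cases s <;>
            exact (SimpleGraph.fromRel_adj _ _ _).mpr ⟨by simp, by simp [gadgetRel]⟩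
    · fin_cases k
      · exact ⟨cl j 1, ⟨Sum.inl j, rfl⟩, rfl, (adj_cl0 pos lit j _).mpr rfl⟩
      · exact absurd ⟨Sum.inl j, rfl⟩ hv
      · obtain ⟨k₀, hk₀⟩ := hsat j
        exact ⟨var (lit j k₀) (pos j) 2,
          ⟨Sum.inr (Sum.inr (lit j k₀)), by simp [hF, hk₀]⟩, rfl,
          (adj_cl2 pos lit j _).mpr (Or.inr ⟨k₀, rfl⟩)⟩
  · have hFinj : Function.Injective F := by
      rintro (j | i | i) (j' | i' | i') h <;> simp only [hF, Sum.elim_inl, Sum.elim_inr] at h <;> simp_all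
    rw [show Set.range F = ↑(Finset.univ.image F) by simp, Set.ncard_coe_finset,
      Finset.card_image_of_injective _ hFinj]
    simp; omega
lemma backward {n m : ℕ} (pos : Fin m → Bool) (lit : Fin m → Fin 3 → Fin n)
    (hconn : (gadgetGraph pos lit).Connected) (S : Set (GVert n m))
    (hS : IsSelective (gadgetGraph pos lit) gadgetColor S)
    (hcard : S.ncard ≤ 2 * n + m) :
    ∃ σ : Fin n → Bool, ∀ j : Fin m, ∃ k : Fin 3, σ (lit j k) = pos j := by
  classical
  have hA : ∀ j : Fin m, ∃ a, a ∈ S ∧ (a = cl j 0 ∨ a = cl j 1) := by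
    intro j
    have h01 : (gadgetGraph pos lit).Adj (cl j 0) (cl j 1) :=
      (adj_cl0 pos lit j _).mpr rfl
    have h12 : (gadgetGraph pos lit).Adj (cl j 1) (cl j 2) :=
      (adj_cl1 pos lit j _).mpr (Or.inr rfl)
    obtain ⟨u, huS, hc, hcase⟩ := sel_extract2 hconn hS (cl j 0) (cl j 2)
      (by simp [gadgetColor]) (le_refl 2) (dist_le_two h01 h12)
    rcases hcase with rfl | h | ⟨w, h1, h2⟩
    · exact ⟨_, huS, Or.inl rfl⟩
    · rw [adj_cl0] at h
      exact ⟨u, huS, Or.inr h⟩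
    · rw [adj_cl0] at h1
      subst h1
      rw [adj_cl1] at h2
      rcases h2 with rfl | rfl
      · exact ⟨_, huS, Or.inl rfl⟩
      · exact absurd hc (by simp [gadgetColor])
  have hB : ∀ i : Fin n, ∃ a, a ∈ S ∧ (a = var i true 0 ∨ a = var i false 0) := by
    intro i
    obtain ⟨u, huS, hc, hcase⟩ := sel_extract1 hconn hS (var i true 0) (var i true 1)
      (by simp [gadgetColor])
      (dist_le_one ((adj_var0 pos lit i true _).mpr (Or.inl rfl)))
    rcases hcase with rfl | h
    · exact ⟨_, huS, Or.inl rfl⟩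
    · rw [adj_var0] at h
      rcases h with rfl | rfl
      · exact absurd hc (by simp [gadgetColor])
      · exact ⟨_, huS, Or.inr rfl⟩
  have hC : ∀ i : Fin n, ∃ a, a ∈ S ∧
      (a = var i true 1 ∨ a = var i true 2 ∨ a = var i false 2) := by
    intro i
    obtain ⟨u, huS, hc, hcase⟩ := sel_extract1 hconn hS (var i true 1) (var i true 0)
      (by simp [gadgetColor])
      (dist_le_one ((adj_var1 pos lit i true _).mpr (Or.inl rfl)))
    rcases hcase with rfl | h
    · exact ⟨_, huS, Or.inl rfl⟩
    · rw [adj_var1] at h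
      rcases h with rfl | rfl | rfl
      · exact absurd hc (by simp [gadgetColor])
      · exact ⟨_, huS, Or.inr (Or.inl rfl)⟩
      · exact ⟨_, huS, Or.inr (Or.inr rfl)⟩
  have hD : ∀ j : Fin m, ∃ a, a ∈ S ∧
      (a = cl j 2 ∨ ∃ k : Fin 3, a = var (lit j k) (pos j) 2) := by
    intro j
    obtain ⟨u, huS, hc, hcase⟩ := sel_extract1 hconn hS (cl j 2) (cl j 1)
      (by simp [gadgetColor])
      (dist_le_one ((adj_cl2 pos lit j _).mpr (Or.inl rfl)))
    rcases hcase with rfl | h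
    · exact ⟨_, huS, Or.inl rfl⟩
    · rw [adj_cl2] at h
      rcases h with rfl | ⟨k, rfl⟩
      · exact absurd hc (by simp [gadgetColor])
      · exact ⟨_, huS, Or.inr ⟨k, rfl⟩⟩
  set F : Fin m ⊕ (Fin n ⊕ Fin n) → GVert n m :=
    Sum.elim (fun j => (hA j).choose)
      (Sum.elim (fun i => (hB i).choose) (fun i => (hC i).choose)) with hF
  have sA : ∀ j, F (Sum.inl j) = cl j 0 ∨ F (Sum.inl j) = cl j 1 :=
    fun j => (hA j).choose_spec.2
  have sB : ∀ i, F (Sum.inr (Sum.inl i)) = var i true 0 ∨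
      F (Sum.inr (Sum.inl i)) = var i false 0 := fun i => (hB i).choose_spec.2
  have sC : ∀ i, F (Sum.inr (Sum.inr i)) = var i true 1 ∨
      F (Sum.inr (Sum.inr i)) = var i true 2 ∨
      F (Sum.inr (Sum.inr i)) = var i false 2 := fun i => (hC i).choose_spec.2
  have hFS : ∀ x, F x ∈ S := by
    rintro (j | i | i)
    · exact (hA j).choose_spec.1
    · exact (hB i).choose_spec.1
    · exact (hC i).choose_spec.1
  have hFinj : Function.Injective F := by
    rintro (j | i | i) (j' | i' | i') h
    · rcases sA j with h1 | h1 <;> rcases sA j' with h2 | h2 <;>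
        rw [h1, h2] at h <;> simp_all
    · rcases sA j with h1 | h1 <;> rcases sB i' with h2 | h2 <;>
        rw [h1, h2] at h <;> simp_all
    · rcases sA j with h1 | h1 <;> rcases sC i' with h2 | h2 | h2 <;>
        rw [h1, h2] at h <;> simp_all
    · rcases sB i with h1 | h1 <;> rcases sA j' with h2 | h2 <;>
        rw [h1, h2] at h <;> simp_all
    · rcases sB i with h1 | h1 <;> rcases sB i' with h2 | h2 <;>
        rw [h1, h2] at h <;> simp_all
    · rcases sB i with h1 | h1 <;> rcases sC i' with h2 | h2 | h2 <;>
        rw [h1, h2] at h <;> simp_all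
    · rcases sC i with h1 | h1 | h1 <;> rcases sA j' with h2 | h2 <;>
        rw [h1, h2] at h <;> simp_all
    · rcases sC i with h1 | h1 | h1 <;> rcases sB i' with h2 | h2 <;>
        rw [h1, h2] at h <;> simp_all
    · rcases sC i with h1 | h1 | h1 <;> rcases sC i' with h2 | h2 | h2 <;>
        rw [h1, h2] at h <;> simp_all
  have hsub : S ⊆ Set.range F := by
    by_contra hns
    rw [Set.not_subset] at hns
    obtain ⟨w, hwS, hwr⟩ := hns
    have h2 : insert w (Set.range F) ⊆ S := by
      rintro x (rfl | ⟨y, rfl⟩)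
      · exact hwS
      · exact hFS y
    have h3 : (insert w (Set.range F)).ncard ≤ S.ncard :=
      Set.ncard_le_ncard h2 (Set.toFinite S)
    rw [Set.ncard_insert_of_notMem hwr (Set.toFinite _)] at h3
    have h4 : (Set.range F).ncard = m + (n + n) := by
      rw [show Set.range F = ↑(Finset.univ.image F) by simp, Set.ncard_coe_finset,
        Finset.card_image_of_injective _ hFinj]
      simp
    omega
  have key : ∀ (i₀ : Fin n) (s : Bool), var i₀ s 2 ∈ S →
      F (Sum.inr (Sum.inr i₀)) = var i₀ s 2 := by
    intro i₀ s hmem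
    obtain ⟨x, hx⟩ := hsub hmem
    rcases x with j' | i' | i'
    · rcases sA j' with h1 | h1 <;> rw [h1] at hx <;> exact absurd hx (by simp)
    · rcases sB i' with h1 | h1 <;> rw [h1] at hx <;> exact absurd hx (by simp)
    · rcases sC i' with h1 | h1 | h1 <;> rw [h1] at hx
      · exact absurd hx (by simp)
      · obtain ⟨hi, hs⟩ := by simpa using hx
        subst hi; subst hs; exact h1
      · obtain ⟨hi, hs⟩ := by simpa using hx
        subst hi; subst hs; exact h1
  refine ⟨fun i => decide (var i true 2 ∈ S), fun j => ?_⟩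
  obtain ⟨a, haS, hcase⟩ := hD j
  rcases hcase with rfl | ⟨k, rfl⟩
  · exfalso
    obtain ⟨x, hx⟩ := hsub haS
    rcases x with j' | i' | i'
    · rcases sA j' with h1 | h1 <;> rw [h1] at hx <;> exact absurd hx (by simp)
    · rcases sB i' with h1 | h1 <;> rw [h1] at hx <;> exact absurd hx (by simp)
    · rcases sC i' with h1 | h1 | h1 <;> rw [h1] at hx <;> exact absurd hx (by simp)
  · refine ⟨k, ?_⟩
    cases hposj : pos j
    · rw [hposj] at haS
      simp only [decide_eq_false_iff_not]
      intro hmem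
      have h1 := key (lit j k) true hmem
      have h2 := key (lit j k) false haS
      rw [h1] at h2
      simp at h2
    · rw [hposj] at haS
      simp only [decide_eq_true_eq]
      exact haS

/-- If `G_θ` has a selective subset of cardinality at most `2n + m`, then the monotone
3-CNF formula `θ` is satisfiable; consequently, `θ` is satisfiable iff `G_θ` admits a
selective subset of size `2n + m`. -/
theorem stmt_13 {n m : ℕ} (pos : Fin m → Bool) (lit : Fin m → Fin 3 → Fin n)
    (hdis : ∀ j : Fin m, Function.Injective (lit j))
    (hconn : (gadgetGraph pos lit).Connected) :
    ((∃ S : Set (GVert n m), IsSelective (gadgetGraph pos lit) gadgetColor S ∧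
        S.ncard ≤ 2 * n + m) →
      ∃ σ : Fin n → Bool, ∀ j : Fin m, ∃ k : Fin 3, σ (lit j k) = pos j) ∧
    ((∃ σ : Fin n → Bool, ∀ j : Fin m, ∃ k : Fin 3, σ (lit j k) = pos j) ↔
      ∃ S : Set (GVert n m), IsSelective (gadgetGraph pos lit) gadgetColor S ∧
        S.ncard = 2 * n + m) := by
  refine ⟨fun ⟨S, hS, hcard⟩ => backward pos lit hconn S hS hcard,
    fun ⟨σ, hσ⟩ => forward pos lit hconn σ hσ,
    fun ⟨S, hS, hcard⟩ => backward pos lit hconn S hS (le_of_eq hcard)⟩
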